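/- arXiv:2604.27241 — 5 statements merged into one kernel-verified Lean document; each statement's English description precedes it below -/
import Mathlib

section
/- In a finite graded directed graph, for every connected component C (of the underlying undirected graph), Σ_{u ∈ C} LP(u)·RP(u) = Σ_{η ∈ P(C)} (len(η) + 1), where P(C) is the set of root-to-leaf paths contained in C and len(η) is the number of edges of η. Consequently Σ_{u ∈ C} LP(u)·RP(u) = |P(C)| · (E[len] + 1), where E[len] is the average length of a root-to-leaf path in C. -/
/-!
By the recursions, `LP(u)` counts the paths from `u` down to a leaf and `RP(u)` the paths from a
root to `u` (the leaf paths of the reversed graph). Cutting a root-to-leaf path at one of its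
vertices `u` is a bijection onto pairs of such paths, because the grading makes every directed path
injective; hence `RP(u)·LP(u)` counts the root-to-leaf paths through `u`. Summing over `u ∈ C`
counts each root-to-leaf path in `C` once per vertex, i.e. `len + 1` times, and a path through a
vertex of `C` lies entirely in `C`.
-/

/-- A leaf of a directed graph: a vertex with no outgoing edges. -/
def IsLeaf {V : Type*} (E : V → V → Prop) (u : V) : Prop := ∀ v, ¬ E u v

/-- A root of a directed graph: a vertex with no incoming edges. -/
def IsRoot {V : Type*} (E : V → V → Prop) (u : V) : Prop := ∀ t, ¬ E t u

open Finset

theorem List.IsChain.forall_mem_of_mem {α : Type*} {r : α → α → Prop} {p : α → Prop}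
    (hfwd : ∀ ⦃x y⦄, r x y → p x → p y) (hbwd : ∀ ⦃x y⦄, r x y → p y → p x)
    {l : List α} (hl : l.IsChain r) {u : α} (hul : u ∈ l) (hu : p u) : ∀ w ∈ l, p w := by
  obtain ⟨a, b, rfl⟩ := List.append_of_mem hul
  obtain ⟨ha, hb⟩ := List.isChain_split.mp hl
  intro w hw
  rcases List.mem_append.mp hw with hw | hw
  · exact ha.backwards_concat_induction p a hbwd hu w hw
  · exact (List.mem_cons.mp hw).elim (· ▸ hu) (hb.cons_induction p b hfwd hu w)

theorem List.IsChain.nodup_of_strictMono {α β : Type*} [Preorder β] {r : α → α → Prop}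
    {f : α → β} (hf : ∀ x y, r x y → f x < f y) {l : List α} (hl : l.IsChain r) : l.Nodup :=
  ((hl.imp hf).pairwise (R := fun x y => f x < f y)).nodup

theorem List.finite_setOf_nodup {α : Type*} [Finite α] : {l : List α | l.Nodup}.Finite := by
  have := Fintype.ofFinite α
  exact Set.finite_coe_iff.mp (inferInstanceAs (Finite {l : List α // l.Nodup}))

theorem Finset.sum_eq_card_mul_average_add_one {ι K : Type*} [Field K] [CharZero K]
    (s : Finset ι) (f : ι → K) : ∑ i ∈ s, f i = #s * ((∑ i ∈ s, (f i - 1)) / #s + 1) := by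
  rcases s.eq_empty_or_nonempty with rfl | hs
  · simp
  · have : (#s : K) ≠ 0 := Nat.cast_ne_zero.mpr hs.card_ne_zero
    rw [sum_sub_distrib, sum_const, nsmul_one]
    field_simp
    ring

theorem Finset.sum_card_filter_mem_eq_sum_length {α : Type*} [DecidableEq α] {C : Finset α}
    {T : Finset (List α)} (hT : ∀ l ∈ T, l.Nodup ∧ ∀ w ∈ l, w ∈ C) :
    ∑ u ∈ C, #{l ∈ T | u ∈ l} = ∑ l ∈ T, l.length := by
  refine (sum_card_bipartiteAbove_eq_sum_card_bipartiteBelow (· ∈ ·)).trans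
    (sum_congr rfl fun l hl => ?_)
  have : {u ∈ C | u ∈ l} = l.toFinset := by
    ext u
    simpa using fun hu => (hT l hl).2 u hu
  rw [bipartiteBelow, this, List.toFinset_card_of_nodup (hT l hl).1]

section Paths

variable {V : Type*} (E : V → V → Prop)

def IsLeafTail (u : V) (t : List V) : Prop :=
  (u :: t).IsChain E ∧ IsLeaf E ((u :: t).getLast (List.cons_ne_nil u t))

def IsRootLeafPath (l : List V) : Prop :=
  l ≠ [] ∧ l.IsChain E ∧ (∀ w ∈ l.head?, IsRoot E w) ∧ (∀ w ∈ l.getLast?, IsLeaf E w)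

variable {E}

theorem isLeafTail_nil {u : V} : IsLeafTail E u [] ↔ IsLeaf E u := by
  simp [IsLeafTail]

theorem isLeafTail_cons {u v : V} {t : List V} :
    IsLeafTail E u (v :: t) ↔ E u v ∧ IsLeafTail E v t := by
  simp only [IsLeafTail, List.isChain_cons_cons, List.getLast_cons_cons, and_assoc]

theorem isRootLeafPath_reverse_append_cons {u : V} {s t : List V} :
    IsRootLeafPath E (s.reverse ++ u :: t) ↔
      IsLeafTail (fun a b => E b a) u s ∧ IsLeafTail E u t := by
  have hhead : (s.reverse ++ u :: t).head? = some ((u :: s).getLast (List.cons_ne_nil u s)) := by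
    rw [← List.getLast?_eq_some_getLast, ← List.head?_reverse, List.reverse_cons]
    cases s.reverse <;> rfl
  rw [IsRootLeafPath, IsLeafTail, IsLeafTail, hhead, List.getLast?_append_cons,
    List.getLast?_eq_some_getLast (List.cons_ne_nil u t), List.isChain_split, ← List.reverse_cons,
    List.isChain_reverse]
  simp only [ne_eq, List.append_eq_nil_iff, reduceCtorEq, and_false, not_false_eq_true,
    Option.mem_def, Option.some.injEq, forall_eq', true_and]
  exact ⟨fun ⟨⟨h1, h2⟩, h3, h4⟩ => ⟨⟨h1, h3⟩, h2, h4⟩, fun ⟨⟨h1, h3⟩, h2, h4⟩ => ⟨⟨h1, h2⟩, h3, h4⟩⟩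

theorem List.IsChain.forall_mem_of_mem_component {C : Finset V}
    (hC : ∀ u ∈ C, ∀ v, v ∈ C ↔ Relation.ReflTransGen (fun a b => E a b ∨ E b a) u v)
    {l : List V} (hl : l.IsChain E) {u : V} (hul : u ∈ l) (hu : u ∈ C) : ∀ w ∈ l, w ∈ C :=
  hl.forall_mem_of_mem (fun x y h hx => (hC x hx y).mpr (.single (.inl h)))
    (fun x y h hy => (hC y hy x).mpr (.single (.inr h))) hul hu

end Paths

section Finite

variable {V : Type*} [Finite V] {E : V → V → Prop} {dim : V → ℤ}

variable (E) in
/-- Paths from `u` to a leaf, recorded by their tails; `Nodup` only serves to make the set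
finite, and is automatic in a graded graph (`mem_leafTails`). -/
noncomputable def leafTails (u : V) : Finset (List V) :=
  (List.finite_setOf_nodup.subset (t := {t | (u :: t).Nodup ∧ IsLeafTail E u t})
    fun _ h => h.1.of_cons).toFinset

variable (E) in
noncomputable def rootLeafPaths : Finset (List V) :=
  (List.finite_setOf_nodup.subset (t := {l | l.Nodup ∧ IsRootLeafPath E l})
    fun _ h => h.1).toFinset

theorem nodup_cons_of_mem_leafTails {u : V} {t : List V} (h : t ∈ leafTails E u) :
    (u :: t).Nodup :=
  ((Set.Finite.mem_toFinset _).mp h).1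

theorem mem_leafTails (hdim : ∀ u v, E u v → dim u < dim v) {u : V} {t : List V} :
    t ∈ leafTails E u ↔ IsLeafTail E u t := by
  simp only [leafTails, Set.Finite.mem_toFinset, Set.mem_ofPred_eq, and_iff_right_iff_imp]
  exact fun h => h.1.nodup_of_strictMono hdim

theorem mem_rootLeafPaths (hdim : ∀ u v, E u v → dim u < dim v) {l : List V} :
    l ∈ rootLeafPaths E ↔ IsRootLeafPath E l := by
  simpa [rootLeafPaths] using fun h => h.2.1.nodup_of_strictMono hdim

theorem leafTails_of_isLeaf (hdim : ∀ u v, E u v → dim u < dim v) {u : V} (hu : IsLeaf E u) :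
    leafTails E u = {[]} := by
  ext (_ | ⟨v, t⟩)
  · simpa [mem_leafTails hdim, isLeafTail_nil] using hu
  · simpa [mem_leafTails hdim, isLeafTail_cons] using fun h _ => hu v h

theorem card_leafTails_swap_mul_card_leafTails [DecidableEq V]
    (hdim : ∀ u v, E u v → dim u < dim v) (u : V) :
    #(leafTails (fun a b => E b a) u) * #(leafTails E u) = #{l ∈ rootLeafPaths E | u ∈ l} := by
  have hdim' : ∀ a b, E b a → -dim a < -dim b := fun a b h => neg_lt_neg (hdim b a h)
  rw [← card_product]
  refine card_bij (fun st _ => st.1.reverse ++ u :: st.2) ?_ ?_ ?_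
  · rintro ⟨s, t⟩ hst
    rw [mem_product, mem_leafTails hdim', mem_leafTails hdim] at hst
    rw [mem_filter, mem_rootLeafPaths hdim, isRootLeafPath_reverse_append_cons]
    exact ⟨hst, by simp⟩
  · rintro ⟨s, t⟩ hst ⟨s', t'⟩ - h
    rw [mem_product] at hst
    have hs : u ∉ s.reverse := by simpa using (nodup_cons_of_mem_leafTails hst.1).notMem
    have ht : u ∉ t := (nodup_cons_of_mem_leafTails hst.2).notMem
    obtain ⟨hss', -, htt'⟩ := (List.append_cons_inj_of_notMem hs ht).mp h
    rw [List.reverse_inj.mp hss', htt']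
  · intro l hl
    rw [mem_filter, mem_rootLeafPaths hdim] at hl
    obtain ⟨hpath, hul⟩ := hl
    obtain ⟨a, b, rfl⟩ := List.append_of_mem hul
    rw [← List.reverse_reverse a, isRootLeafPath_reverse_append_cons] at hpath
    refine ⟨(a.reverse, b), ?_, by simp⟩
    rwa [mem_product, mem_leafTails hdim', mem_leafTails hdim]

end Finite

section Fintype

variable {V : Type*} [Fintype V] {E : V → V → Prop} [DecidableRel E] {dim : V → ℤ}

theorem leafTails_of_not_isLeaf [DecidableEq V] (hdim : ∀ u v, E u v → dim u < dim v) {u : V}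
    (hu : ¬ IsLeaf E u) :
    leafTails E u =
      (univ.filter fun v => E u v).biUnion fun v => (leafTails E v).image (v :: ·) := by
  ext (_ | ⟨v, t⟩)
  · simpa [mem_leafTails hdim, isLeafTail_nil] using hu
  · simp [mem_leafTails hdim, isLeafTail_cons]

theorem eq_card_leafTails (hdim : ∀ u v, E u v → dim u < dim v) (f : V → ℕ)
    (hleaf : ∀ u, IsLeaf E u → f u = 1)
    (hrec : ∀ u, ¬ IsLeaf E u → f u = ∑ v ∈ univ.filter (fun v => E u v), f v) (u : V) :
    f u = #(leafTails E u) := by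
  classical
  by_cases hu : IsLeaf E u
  · rw [hleaf u hu, leafTails_of_isLeaf hdim hu, card_singleton]
  rw [hrec u hu, leafTails_of_not_isLeaf hdim hu, card_biUnion]
  · refine sum_congr rfl fun v hv => ?_
    rw [card_image_of_injective _ List.cons_injective, eq_card_leafTails hdim f hleaf hrec v]
  · intro v _ w _ hvw
    simp only [Function.onFun, disjoint_left, mem_image]
    rintro _ ⟨t, -, rfl⟩ ⟨t', -, h⟩
    exact hvw (List.cons.inj h).1.symm
termination_by #{w | dim u < dim w}
decreasing_by
  have huv := hdim u v (mem_filter.mp hv).2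
  refine card_lt_card ⟨fun w hw => ?_, fun h => ?_⟩
  · simp only [mem_filter, mem_univ, true_and] at hw ⊢
    exact huv.trans hw
  · simpa using h (mem_filter.mpr ⟨mem_univ v, huv⟩)

end Fintype

theorem stmt2_general {V : Type} [Fintype V]
    (E : V → V → Prop) [DecidableRel E] (dim : V → ℤ)
    (hdim : ∀ u v, E u v → dim u < dim v)
    (LP RP : V → ℕ)
    (hLPleaf : ∀ u, IsLeaf E u → LP u = 1)
    (hLPrec : ∀ u, ¬ IsLeaf E u →
      LP u = ∑ v ∈ Finset.univ.filter (fun v => E u v), LP v)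
    (hRProot : ∀ u, IsRoot E u → RP u = 1)
    (hRPrec : ∀ u, ¬ IsRoot E u →
      RP u = ∑ t ∈ Finset.univ.filter (fun t => E t u), RP t)
    (C : Finset V)
    (hC : ∀ u ∈ C, ∀ v, v ∈ C ↔ Relation.ReflTransGen (fun a b => E a b ∨ E b a) u v)
    (S : Set (List V))
    (hS : S = {l : List V | l ≠ [] ∧ l.Chain' E ∧
      (∀ w ∈ l.head?, IsRoot E w) ∧ (∀ w ∈ l.getLast?, IsLeaf E w) ∧
      ∀ w ∈ l, w ∈ C})
    (hfin : S.Finite)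
    (Elen : ℚ)
    (hE : Elen = (∑ l ∈ hfin.toFinset, ((l.length : ℚ) - 1)) / hfin.toFinset.card) :
    (∑ u ∈ C, LP u * RP u) = (∑ l ∈ hfin.toFinset, l.length) ∧
    ((∑ u ∈ C, LP u * RP u : ℕ) : ℚ) = hfin.toFinset.card * (Elen + 1) := by
  classical
  have hT : hfin.toFinset = {l ∈ rootLeafPaths E | ∀ w ∈ l, w ∈ C} := by
    ext l
    simp only [Set.Finite.mem_toFinset, hS, mem_filter, mem_rootLeafPaths hdim, IsRootLeafPath,
      and_assoc]
    rfl
  have hRP : ∀ u, RP u = #(leafTails (fun a b => E b a) u) :=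
    eq_card_leafTails (dim := -dim) (fun u v h => neg_lt_neg (hdim v u h)) RP hRProot hRPrec
  have key : ∑ u ∈ C, LP u * RP u = ∑ l ∈ hfin.toFinset, l.length := calc
    ∑ u ∈ C, LP u * RP u = ∑ u ∈ C, #{l ∈ hfin.toFinset | u ∈ l} := by
      refine sum_congr rfl fun u hu => ?_
      rw [eq_card_leafTails hdim LP hLPleaf hLPrec, hRP, mul_comm,
        card_leafTails_swap_mul_card_leafTails hdim, hT, filter_filter]
      refine congrArg card (filter_congr fun l hl => ⟨fun hul => ⟨?_, hul⟩, And.right⟩)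
      exact ((mem_rootLeafPaths hdim).mp hl).2.1.forall_mem_of_mem_component hC hul hu
    _ = ∑ l ∈ hfin.toFinset, l.length := by
      refine sum_card_filter_mem_eq_sum_length fun l hl => ?_
      rw [hT, mem_filter, mem_rootLeafPaths hdim] at hl
      exact ⟨hl.1.2.1.nodup_of_strictMono hdim, hl.2⟩
  refine ⟨key, ?_⟩
  rw [key, hE]
  push_cast
  exact sum_eq_card_mul_average_add_one _ _

/-- In a finite graded directed graph, for every connected component `C` of the
underlying undirected graph, `Σ_{u ∈ C} LP(u)·RP(u) = Σ_{η ∈ P(C)} (len(η)+1)`,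
where `P(C)` is the (finite) set of root-to-leaf paths contained in `C`;
consequently this sum equals `|P(C)| · (E[len] + 1)`, `E[len]` being the average
length of a root-to-leaf path in `C`. Note `len(η) + 1` is the number of
vertices of the path `η`. -/
theorem stmt2 {V : Type} [Fintype V] [DecidableEq V]
    (E : V → V → Prop) [DecidableRel E] (dim : V → ℤ)
    (hdim : ∀ u v, E u v → dim u < dim v)
    (LP RP : V → ℕ)
    (hLPleaf : ∀ u, IsLeaf E u → LP u = 1)
    (hLPrec : ∀ u, ¬ IsLeaf E u →
      LP u = ∑ v ∈ Finset.univ.filter (fun v => E u v), LP v)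
    (hRProot : ∀ u, IsRoot E u → RP u = 1)
    (hRPrec : ∀ u, ¬ IsRoot E u →
      RP u = ∑ t ∈ Finset.univ.filter (fun t => E t u), RP t)
    (C : Finset V) (hCne : C.Nonempty)
    (hC : ∀ u ∈ C, ∀ v, v ∈ C ↔ Relation.ReflTransGen (fun a b => E a b ∨ E b a) u v)
    (S : Set (List V))
    (hS : S = {l : List V | l ≠ [] ∧ l.Chain' E ∧
      (∀ w ∈ l.head?, IsRoot E w) ∧ (∀ w ∈ l.getLast?, IsLeaf E w) ∧
      ∀ w ∈ l, w ∈ C})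
    (hfin : S.Finite)
    (Elen : ℚ)
    (hE : Elen = (∑ l ∈ hfin.toFinset, ((l.length : ℚ) - 1)) / hfin.toFinset.card) :
    (∑ u ∈ C, LP u * RP u) = (∑ l ∈ hfin.toFinset, l.length) ∧
    ((∑ u ∈ C, LP u * RP u : ℕ) : ℚ) = hfin.toFinset.card * (Elen + 1) :=
  stmt2_general E dim hdim LP RP hLPleaf hLPrec hRProot hRPrec C hC S hS hfin Elen hE
end

section
/- In a finite abstract simplicial complex, for every k-face σ with k ≥ 1, Σ_{σ' ~down σ} LP(σ)·LP(σ')/LP(σ ∩ σ') = (k+1)·LP(σ) − LP(σ)² · Σ_{ρ ⊂ σ, dim ρ = k−1} LP(ρ)^{−1}, where σ' ranges over k-faces down-adjacent to σ (σ ≠ σ', σ ∩ σ' is a (k−1)-face). In particular the normalized weighted down-degree Σ_{σ'~down σ} LP(σ')/LP(σ∩σ') = (k+1) − LP(σ)·Σ_{ρ⊂σ} LP(ρ)^{−1} ≤ k+1. -/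
/-- In a finite abstract simplicial complex, for every `k`-face `σ` with
`k ≥ 1`, `Σ_{σ' ~down σ} LP(σ)·LP(σ')/LP(σ∩σ')
 = (k+1)·LP(σ) − LP(σ)²·Σ_{ρ ⊂ σ, codim 1} LP(ρ)⁻¹`; in particular the
normalized weighted down-degree
`Σ_{σ'~down σ} LP(σ')/LP(σ∩σ') = (k+1) − LP(σ)·Σ_{ρ⊂σ} LP(ρ)⁻¹ ≤ k+1`. -/
theorem stmt9 {α : Type} [DecidableEq α] [Fintype α]
    (K : Finset (Finset α))
    (hKne : ∀ σ ∈ K, σ.Nonempty)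
    (hKdc : ∀ σ ∈ K, ∀ τ, τ ⊆ σ → τ.Nonempty → τ ∈ K)
    (LP : Finset α → ℕ)
    (hLPfacet : ∀ σ ∈ K, (∀ τ ∈ K, σ ⊆ τ → σ = τ) → LP σ = 1)
    (hLPrec : ∀ σ ∈ K, ¬ (∀ τ ∈ K, σ ⊆ τ → σ = τ) →
      LP σ = ∑ τ ∈ K.filter (fun τ => σ ⊆ τ ∧ τ.card = σ.card + 1), LP τ)
    (k : ℕ) (hk : 1 ≤ k) :
    ∀ σ ∈ K, σ.card = k + 1 →
      (∑ σ' ∈ K.filter (fun σ' => σ' ≠ σ ∧ σ'.card = k + 1 ∧ (σ ∩ σ').card = k),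
          (LP σ : ℚ) * (LP σ' : ℚ) / (LP (σ ∩ σ') : ℚ))
        = (k + 1 : ℚ) * (LP σ : ℚ) - (LP σ : ℚ) ^ 2 *
            ∑ ρ ∈ K.filter (fun ρ => ρ ⊆ σ ∧ ρ.card = k), ((LP ρ : ℚ))⁻¹ ∧
      (∑ σ' ∈ K.filter (fun σ' => σ' ≠ σ ∧ σ'.card = k + 1 ∧ (σ ∩ σ').card = k),
          (LP σ' : ℚ) / (LP (σ ∩ σ') : ℚ))
        = (k + 1 : ℚ) - (LP σ : ℚ) *
            ∑ ρ ∈ K.filter (fun ρ => ρ ⊆ σ ∧ ρ.card = k), ((LP ρ : ℚ))⁻¹ ∧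
      (∑ σ' ∈ K.filter (fun σ' => σ' ≠ σ ∧ σ'.card = k + 1 ∧ (σ ∩ σ').card = k),
          (LP σ' : ℚ) / (LP (σ ∩ σ') : ℚ)) ≤ (k + 1 : ℚ) := by
  -- positivity of LP on K
  have hLPpos : ∀ σ ∈ K, 0 < LP σ := by
    suffices h : ∀ n, ∀ σ ∈ K, Fintype.card α - σ.card ≤ n → 0 < LP σ by
      exact fun σ hσ => h _ σ hσ le_rfl
    intro n
    induction n with
    | zero =>
      intro σ hσ hle
      have hcu := Finset.card_le_univ σ
      have hcard : σ.card = Fintype.card α := by omega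
      have hf : ∀ τ ∈ K, σ ⊆ τ → σ = τ := fun τ _ hsub =>
        Finset.eq_of_subset_of_card_le hsub (by rw [hcard]; exact Finset.card_le_univ τ)
      rw [hLPfacet σ hσ hf]; norm_num
    | succ n ih =>
      intro σ hσ hle
      by_cases hf : ∀ τ ∈ K, σ ⊆ τ → σ = τ
      · rw [hLPfacet σ hσ hf]; norm_num
      · rw [hLPrec σ hσ hf]
        push_neg at hf
        obtain ⟨τ, hτK, hsub, hne⟩ := hf
        obtain ⟨x, hxτ, hxσ⟩ := Finset.exists_of_ssubset (hsub.ssubset_of_ne hne)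
        have hσ'K : insert x σ ∈ K :=
          hKdc τ hτK _ (Finset.insert_subset hxτ hsub) ⟨x, Finset.mem_insert_self x σ⟩
        have hcard' : (insert x σ).card = σ.card + 1 := Finset.card_insert_of_notMem hxσ
        refine Finset.sum_pos' (fun i _ => Nat.zero_le _) ⟨insert x σ, ?_, ?_⟩
        · simp only [Finset.mem_filter]
          exact ⟨hσ'K, Finset.subset_insert x σ, hcard'⟩
        · apply ih _ hσ'K
          have := Finset.card_le_univ (insert x σ)
          omega
  intro σ hσ hσcard
  set S := K.filter (fun σ' => σ' ≠ σ ∧ σ'.card = k + 1 ∧ (σ ∩ σ').card = k) with hS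
  set R := K.filter (fun ρ => ρ ⊆ σ ∧ ρ.card = k) with hR
  -- every ρ ⊆ σ of card k is in K
  have hsubK : ∀ ρ : Finset α, ρ ⊆ σ → ρ.card = k → ρ ∈ K := by
    intro ρ hsub hcard
    exact hKdc σ hσ ρ hsub (Finset.card_pos.mp (by omega))
  -- the fibering map
  have hmaps : ∀ σ' ∈ S, σ ∩ σ' ∈ R := by
    intro σ' hσ'
    rw [hS, Finset.mem_filter] at hσ'
    obtain ⟨_, _, _, hic⟩ := hσ'
    rw [hR, Finset.mem_filter]
    exact ⟨hsubK _ Finset.inter_subset_left hic, Finset.inter_subset_left, hic⟩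
  -- cardinality of R
  have hRcard : R.card = k + 1 := by
    have : R = σ.powersetCard k := by
      ext ρ
      rw [hR, Finset.mem_filter, Finset.mem_powersetCard]
      constructor
      · rintro ⟨_, h1, h2⟩; exact ⟨h1, h2⟩
      · rintro ⟨h1, h2⟩; exact ⟨hsubK ρ h1 h2, h1, h2⟩
    rw [this, Finset.card_powersetCard, hσcard, Nat.choose_succ_self_right]
  -- fiber sums
  have hfiber : ∀ ρ ∈ R, (LP ρ : ℚ) =
      (LP σ : ℚ) + ∑ σ' ∈ S.filter (fun σ' => σ ∩ σ' = ρ), (LP σ' : ℚ) := by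
    intro ρ hρ
    rw [hR, Finset.mem_filter] at hρ
    obtain ⟨hρK, hρsub, hρcard⟩ := hρ
    have hρnf : ¬ (∀ τ ∈ K, ρ ⊆ τ → ρ = τ) := by
      intro h
      have := h σ hσ hρsub
      rw [this] at hρcard; omega
    have hrec := hLPrec ρ hρK hρnf
    have hsetEq : K.filter (fun τ => ρ ⊆ τ ∧ τ.card = ρ.card + 1)
        = insert σ (S.filter (fun σ' => σ ∩ σ' = ρ)) := by
      ext τ
      simp only [Finset.mem_insert, Finset.mem_filter, hS]
      constructor
      · rintro ⟨hτK, hρτ, hτcard⟩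
        by_cases hτσ : τ = σ
        · exact Or.inl hτσ
        · right
          have hρi : ρ ⊆ σ ∩ τ := Finset.subset_inter hρsub hρτ
          have hlow : k ≤ (σ ∩ τ).card := hρcard ▸ Finset.card_le_card hρi
          have hup : (σ ∩ τ).card ≤ k := by
            by_contra hcon
            have hik : σ ∩ τ = σ :=
              Finset.eq_of_subset_of_card_le Finset.inter_subset_left (by omega)
            have : σ ⊆ τ := by rw [← hik]; exact Finset.inter_subset_right
            exact hτσ ((Finset.eq_of_subset_of_card_le this (by omega)).symm)
          have hic : (σ ∩ τ).card = k := le_antisymm hup hlow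
          have hρeq : σ ∩ τ = ρ :=
            (Finset.eq_of_subset_of_card_le hρi (by omega)).symm
          exact ⟨⟨hτK, hτσ, by omega, hic⟩, hρeq⟩
      · rintro (rfl | ⟨⟨hτK, _, hτcard, _⟩, hρeq⟩)
        · exact ⟨hσ, hρsub, by omega⟩
        · refine ⟨hτK, ?_, by omega⟩
          rw [← hρeq]; exact Finset.inter_subset_right
    have hσnot : σ ∉ S.filter (fun σ' => σ ∩ σ' = ρ) := by
      simp [hS, Finset.mem_filter]
    have : (LP ρ : ℚ) = ∑ τ ∈ insert σ (S.filter (fun σ' => σ ∩ σ' = ρ)), (LP τ : ℚ) := by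
      rw [← hsetEq, hrec]; push_cast; ring
    rw [this, Finset.sum_insert hσnot]
  -- positivity facts in ℚ
  have hRpos : ∀ ρ ∈ R, (0 : ℚ) < (LP ρ : ℚ) := by
    intro ρ hρ
    rw [hR, Finset.mem_filter] at hρ
    exact_mod_cast hLPpos ρ hρ.1
  -- the key identity (second statement)
  have key2 : (∑ σ' ∈ S, (LP σ' : ℚ) / (LP (σ ∩ σ') : ℚ))
      = (k + 1 : ℚ) - (LP σ : ℚ) * ∑ ρ ∈ R, ((LP ρ : ℚ))⁻¹ := by
    rw [← Finset.sum_fiberwise_of_maps_to hmaps (fun σ' => (LP σ' : ℚ) / (LP (σ ∩ σ') : ℚ))]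
    have hcongr : ∀ ρ ∈ R, ∑ σ' ∈ S.filter (fun σ' => σ ∩ σ' = ρ),
        (LP σ' : ℚ) / (LP (σ ∩ σ') : ℚ) = 1 - (LP σ : ℚ) * ((LP ρ : ℚ))⁻¹ := by
      intro ρ hρ
      have hpos := hRpos ρ hρ
      have hstep : ∀ σ' ∈ S.filter (fun σ' => σ ∩ σ' = ρ),
          (LP σ' : ℚ) / (LP (σ ∩ σ') : ℚ) = (LP σ' : ℚ) / (LP ρ : ℚ) := by
        intro σ' hσ'
        rw [(Finset.mem_filter.1 hσ').2]
      rw [Finset.sum_congr rfl hstep, ← Finset.sum_div]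
      have hfs : ∑ σ' ∈ S.filter (fun σ' => σ ∩ σ' = ρ), (LP σ' : ℚ)
          = (LP ρ : ℚ) - (LP σ : ℚ) := by
        have := hfiber ρ hρ; linarith
      rw [hfs]
      field_simp
    rw [Finset.sum_congr rfl hcongr, Finset.sum_sub_distrib, Finset.sum_const, hRcard,
      ← Finset.mul_sum]
    push_cast; ring
  refine ⟨?_, key2, ?_⟩
  · have hfac : (∑ σ' ∈ S, (LP σ : ℚ) * (LP σ' : ℚ) / (LP (σ ∩ σ') : ℚ))
        = (LP σ : ℚ) * ∑ σ' ∈ S, (LP σ' : ℚ) / (LP (σ ∩ σ') : ℚ) := by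
      rw [Finset.mul_sum]
      exact Finset.sum_congr rfl (fun σ' _ => by ring)
    rw [hfac, key2]; ring
  · rw [key2]
    have h1 : (0 : ℚ) ≤ ∑ ρ ∈ R, ((LP ρ : ℚ))⁻¹ :=
      Finset.sum_nonneg (fun ρ hρ => le_of_lt (inv_pos.mpr (hRpos ρ hρ)))
    have h2 : (0 : ℚ) ≤ (LP σ : ℚ) := Nat.cast_nonneg _
    nlinarith
end

section
/- Let Γ be a finite abstract simplicial complex, 1 ≤ k, and let C_k be a set of k-faces that is down-connected (any two faces joined by a chain of faces in C_k intersecting in (k−1)-faces) and maximal with this property. Suppose C_k admits a coherent orientation: an assignment of an orientation to each face in C_k such that any two oriented faces σ, σ' in C_k sharing a (k−1)-face ρ induce the same orientation on ρ (i.e. [σ:ρ] = [σ':ρ]). Then no face of C_k is contained in a (k+1)-face of Γ; every face in C_k is a facet. -/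
/-- The incidence sign `[σ : ρ]` for a codimension-1 subface `ρ ⊂ σ` of a
canonically (increasingly) ordered face: `(-1)` to the power the position of
the removed vertex. (Computed here as a product over `σ \ ρ`, which for a
codimension-1 subface is a single vertex.) -/
def IncSgn {α : Type*} [LinearOrder α] (σ ρ : Finset α) : ℤ :=
  (-1) ^ (∑ x ∈ σ \ ρ, (σ.filter (· < x)).card)

/-- A set `S` of `k`-faces is down-connected if any two of its members are
joined by a chain of faces in `S` with consecutive faces intersecting in
`(k-1)`-faces. -/
def DownConnected {α : Type*} [DecidableEq α] (k : ℕ) (S : Finset (Finset α)) : Prop :=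
  ∀ σ ∈ S, ∀ σ' ∈ S,
    Relation.ReflTransGen (fun a b => a ∈ S ∧ b ∈ S ∧ a ≠ b ∧ (a ∩ b).card = k) σ σ'

/-! Suppose a face `σ ∈ C` lies in a `(k+1)`-face `τ`. The facets of `τ` pairwise meet in
`(k-1)`-faces and one of them is `σ`, so by maximality all of them lie in `C`. For facets
`τ \ {x}` and `τ \ {y}`, coherence on their common face combined with `∂∂ = 0` says that
`x ↦ ε(τ \ {x}) · [τ : τ \ {x}]` takes opposite values at `x` and `y`. A nowhere-zero function
taking opposite values at any two of the `k + 2 ≥ 3` vertices of `τ` cannot exist. -/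

open Finset

lemma eq_zero_of_forall_eq_neg {ι : Type*} {s : Finset ι} (hs : 3 ≤ #s) {f : ι → ℤ}
    (hf : ∀ x ∈ s, ∀ y ∈ s, x ≠ y → f x = -f y) : ∀ x ∈ s, f x = 0 := by
  classical
  intro x hx
  obtain ⟨y, hy, z, hz, hyz⟩ := one_lt_card.1 (show 1 < #(s.erase x) by
    rw [card_erase_of_mem hx]; omega)
  rw [mem_erase] at hy hz
  have := hf x hx y hy.2 hy.1.symm
  have := hf x hx z hz.2 hz.1.symm
  have := hf y hy.2 z hz.2 hyz
  omega

section Boundary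

variable {α : Type*} [DecidableEq α]

lemma card_erase_inter_erase {τ : Finset α} {x y : α} (hx : x ∈ τ) (hy : y ∈ τ)
    (hxy : x ≠ y) : #(τ.erase x ∩ τ.erase y) = #τ - 2 := by
  rw [erase_inter, inter_eq_right.2 (erase_subset y τ),
    card_erase_of_mem (mem_erase.2 ⟨hxy, hx⟩), card_erase_of_mem hy]
  omega

lemma exists_eq_erase_of_subset_of_card_succ {σ τ : Finset α} (hστ : σ ⊆ τ)
    (hcard : #σ + 1 = #τ) : ∃ z ∈ τ, σ = τ.erase z := by
  obtain ⟨z, hzσ, rfl⟩ := exists_eq_insert_iff.2 ⟨hστ, hcard⟩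
  exact ⟨z, mem_insert_self z σ, (erase_insert hzσ).symm⟩

end Boundary

section DownConnected

variable {α : Type*} [DecidableEq α] {k : ℕ}

lemma downConnected_of_pairwise {S : Finset (Finset α)}
    (hS : ∀ a ∈ S, ∀ b ∈ S, a ≠ b → #(a ∩ b) = k) : DownConnected k S := by
  intro a ha b hb
  by_cases hab : a = b
  · rw [hab]
  · exact .single ⟨ha, hb, hab, hS a ha b hb hab⟩

lemma DownConnected.union {S T : Finset (Finset α)} (hS : DownConnected k S)
    (hT : DownConnected k T) {σ : Finset α} (hσS : σ ∈ S) (hσT : σ ∈ T) :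
    DownConnected k (S ∪ T) := by
  have to_σ : ∀ a ∈ S ∪ T, Relation.ReflTransGen
      (fun a b => a ∈ S ∪ T ∧ b ∈ S ∪ T ∧ a ≠ b ∧ #(a ∩ b) = k) a σ := by
    intro a ha
    rcases mem_union.1 ha with ha | ha
    · exact .mono (fun _ _ ⟨h₁, h₂, hne, hc⟩ =>
        ⟨mem_union_left T h₁, mem_union_left T h₂, hne, hc⟩) _ _ (hS a ha σ hσS)
    · exact .mono (fun _ _ ⟨h₁, h₂, hne, hc⟩ =>
        ⟨mem_union_right S h₁, mem_union_right S h₂, hne, hc⟩) _ _ (hT a ha σ hσT)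
  intro a ha b hb
  exact (to_σ a ha).trans <| .mono (fun _ _ ⟨h₁, h₂, hne, hc⟩ =>
    ⟨h₂, h₁, hne.symm, by rwa [inter_comm]⟩) _ _ (to_σ b hb).swap

end DownConnected

section IncSgn

variable {α : Type*} [LinearOrder α]

lemma incSgn_mul_self (σ ρ : Finset α) : IncSgn σ ρ * IncSgn σ ρ = 1 := by
  rw [IncSgn, ← pow_add, ← two_mul, pow_mul, neg_one_sq, one_pow]

lemma incSgn_erase {τ : Finset α} {x : α} (hx : x ∈ τ) :
    IncSgn τ (τ.erase x) = (-1) ^ #{y ∈ τ | y < x} := by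
  rw [IncSgn, sdiff_erase_self hx, sum_singleton]

/-- The identity `∂∂ = 0` on a single codimension-2 face. -/
lemma incSgn_mul_incSgn_erase_erase {τ : Finset α} {x y : α} (hx : x ∈ τ) (hy : y ∈ τ)
    (hxy : x < y) :
    IncSgn τ (τ.erase x) * IncSgn (τ.erase x) (τ.erase x ∩ τ.erase y) =
      -(IncSgn τ (τ.erase y) * IncSgn (τ.erase y) (τ.erase x ∩ τ.erase y)) := by
  rw [inter_erase, inter_eq_left.2 (erase_subset x τ)]
  conv_rhs => rw [erase_right_comm]
  rw [incSgn_erase hx, incSgn_erase hy,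
    incSgn_erase (mem_erase.2 ⟨hxy.ne', hy⟩), incSgn_erase (mem_erase.2 ⟨hxy.ne, hx⟩),
    filter_erase, filter_erase, erase_eq_of_notMem (s := {z ∈ τ | z < x}) (by simp [hxy.le]),
    card_erase_of_mem (s := {z ∈ τ | z < y}) (by simp [hx, hxy])]
  obtain ⟨m, hm⟩ : ∃ m, #{z ∈ τ | z < y} = m + 1 :=
    Nat.exists_eq_add_one_of_ne_zero (card_ne_zero_of_mem (mem_filter.2 ⟨hx, hxy⟩))
  rw [hm, Nat.add_sub_cancel, pow_succ]
  ring

lemma mul_incSgn_erase_eq_neg_of_coherent (ε : Finset α → ℤ) {τ : Finset α} {x y : α}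
    (hx : x ∈ τ) (hy : y ∈ τ) (hxy : x ≠ y)
    (hcoh : ε (τ.erase x) * IncSgn (τ.erase x) (τ.erase x ∩ τ.erase y) =
      ε (τ.erase y) * IncSgn (τ.erase y) (τ.erase x ∩ τ.erase y)) :
    ε (τ.erase x) * IncSgn τ (τ.erase x) = -(ε (τ.erase y) * IncSgn τ (τ.erase y)) := by
  wlog hlt : x < y generalizing x y
  · rw [inter_comm] at hcoh
    linarith [this hy hx hxy.symm hcoh.symm ((lt_or_gt_of_ne hxy).resolve_left hlt)]
  have hdd := incSgn_mul_incSgn_erase_erase hx hy hlt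
  set ρ := τ.erase x ∩ τ.erase y
  -- Multiply `hcoh` by the `∂∂ = 0` identity; every incidence sign squares to `1`.
  linear_combination (IncSgn τ (τ.erase x) * IncSgn (τ.erase x) ρ) * hcoh
    + ε (τ.erase y) * IncSgn (τ.erase y) ρ * hdd
    - ε (τ.erase x) * IncSgn τ (τ.erase x) * incSgn_mul_self (τ.erase x) ρ
    - ε (τ.erase y) * IncSgn τ (τ.erase y) * incSgn_mul_self (τ.erase y) ρ

lemma false_of_coherent_on_boundary (ε : Finset α → ℤ) {τ : Finset α} (hτ : 3 ≤ #τ)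
    (hε : ∀ x ∈ τ, ε (τ.erase x) ≠ 0)
    (hcoh : ∀ x ∈ τ, ∀ y ∈ τ, x ≠ y →
      ε (τ.erase x) * IncSgn (τ.erase x) (τ.erase x ∩ τ.erase y) =
        ε (τ.erase y) * IncSgn (τ.erase y) (τ.erase x ∩ τ.erase y)) : False := by
  obtain ⟨x, hx⟩ : τ.Nonempty := card_pos.1 (by omega)
  have hzero := eq_zero_of_forall_eq_neg hτ
    (f := fun x => ε (τ.erase x) * IncSgn τ (τ.erase x))
    fun x hx y hy hxy => mul_incSgn_erase_eq_neg_of_coherent ε hx hy hxy (hcoh x hx y hy hxy)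
  have hI := incSgn_mul_self τ (τ.erase x)
  rcases mul_eq_zero.1 (hzero x hx) with h | h
  · exact hε x hx h
  · simp [h] at hI

end IncSgn

lemma erase_mem_of_maximal_downConnected {α : Type*} [DecidableEq α]
    {K C : Finset (Finset α)} {k : ℕ}
    (hKdc : ∀ σ ∈ K, ∀ τ, τ ⊆ σ → τ.Nonempty → τ ∈ K)
    (hCK : ∀ σ ∈ C, σ ∈ K ∧ σ.card = k + 1)
    (hCconn : DownConnected k C)
    (hCmax : ∀ T : Finset (Finset α), C ⊆ T →
      (∀ σ ∈ T, σ ∈ K ∧ σ.card = k + 1) → DownConnected k T → T = C)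
    {σ τ : Finset α} (hσ : σ ∈ C) (hτK : τ ∈ K) (hστ : σ ⊆ τ) (hτ : #τ = k + 2) :
    ∀ x ∈ τ, τ.erase x ∈ C := by
  obtain ⟨z, hz, rfl⟩ :=
    exists_eq_erase_of_subset_of_card_succ hστ (by rw [(hCK _ hσ).2, hτ])
  have hB : ∀ ρ ∈ τ.image τ.erase, ρ ∈ K ∧ #ρ = k + 1 := by
    simp only [mem_image]
    rintro _ ⟨x, hx, rfl⟩
    have hcard : #(τ.erase x) = k + 1 := by rw [card_erase_of_mem hx, hτ]; rfl
    exact ⟨hKdc τ hτK _ (erase_subset x τ) (card_pos.1 (by omega)), hcard⟩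
  have hBconn : DownConnected k (τ.image τ.erase) := by
    refine downConnected_of_pairwise ?_
    simp only [mem_image]
    rintro _ ⟨x, hx, rfl⟩ _ ⟨y, hy, rfl⟩ hne
    rw [card_erase_inter_erase hx hy (ne_of_apply_ne _ hne), hτ]
    rfl
  have hCB : C ∪ τ.image τ.erase = C := by
    refine hCmax _ subset_union_left (fun ρ hρ => ?_) (hCconn.union hBconn hσ
      (mem_image_of_mem _ hz))
    exact (mem_union.1 hρ).elim (hCK ρ) (hB ρ)
  intro x hx
  rw [← hCB]
  exact mem_union_right _ (mem_image_of_mem _ hx)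

theorem stmt10_general {α : Type} [LinearOrder α]
    (K : Finset (Finset α))
    (hKdc : ∀ σ ∈ K, ∀ τ, τ ⊆ σ → τ.Nonempty → τ ∈ K)
    (k : ℕ) (hk : 1 ≤ k)
    (C : Finset (Finset α))
    (hCK : ∀ σ ∈ C, σ ∈ K ∧ σ.card = k + 1)
    (hCconn : DownConnected k C)
    (hCmax : ∀ T : Finset (Finset α), C ⊆ T →
      (∀ σ ∈ T, σ ∈ K ∧ σ.card = k + 1) → DownConnected k T → T = C)
    (ε : Finset α → ℤ)
    (hε : ∀ σ ∈ C, ε σ = 1 ∨ ε σ = -1)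
    (hcoh : ∀ σ ∈ C, ∀ σ' ∈ C, σ ≠ σ' → (σ ∩ σ').card = k →
      ε σ * IncSgn σ (σ ∩ σ') = ε σ' * IncSgn σ' (σ ∩ σ')) :
    ∀ σ ∈ C, (∀ τ ∈ K, σ ⊆ τ → τ.card = k + 2 → False) ∧
      (∀ τ ∈ K, σ ⊆ τ → σ = τ) := by
  intro σ hσ
  have no_coface : ∀ τ ∈ K, σ ⊆ τ → #τ = k + 2 → False := by
    intro τ hτK hστ hτ
    have hmem := erase_mem_of_maximal_downConnected hKdc hCK hCconn hCmax hσ hτK hστ hτ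
    refine false_of_coherent_on_boundary ε (show 3 ≤ #τ by omega)
      (fun x hx => by rcases hε _ (hmem x hx) with h | h <;> simp [h]) fun x hx y hy hxy => ?_
    refine hcoh _ (hmem x hx) _ (hmem y hy) ((erase_injOn τ).ne hx hy hxy) ?_
    rw [card_erase_inter_erase hx hy hxy, hτ]
    rfl
  refine ⟨no_coface, fun τ hτK hστ => ?_⟩
  by_contra hne
  obtain ⟨v, hvτ, hvσ⟩ := exists_of_ssubset (hστ.ssubset_of_ne hne)
  exact no_coface (insert v σ) (hKdc τ hτK _ (insert_subset hvτ hστ) (insert_nonempty v σ))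
    (subset_insert v σ) (by rw [card_insert_of_notMem hvσ, (hCK σ hσ).2])

/-- If a maximal down-connected set `C` of `k`-faces (`k ≥ 1`) of a finite
abstract simplicial complex admits a coherent orientation — an assignment
`ε : faces → {±1}` such that any two faces of `C` sharing a `(k−1)`-face `ρ`
induce the same orientation on `ρ` — then no face of `C` is contained in a
`(k+1)`-face of the complex: every face of `C` is a facet. -/
theorem stmt10 {α : Type} [LinearOrder α] [Fintype α]
    (K : Finset (Finset α))
    (hKne : ∀ σ ∈ K, σ.Nonempty)
    (hKdc : ∀ σ ∈ K, ∀ τ, τ ⊆ σ → τ.Nonempty → τ ∈ K)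
    (k : ℕ) (hk : 1 ≤ k)
    (C : Finset (Finset α))
    (hCK : ∀ σ ∈ C, σ ∈ K ∧ σ.card = k + 1)
    (hCconn : DownConnected k C)
    (hCmax : ∀ T : Finset (Finset α), C ⊆ T →
      (∀ σ ∈ T, σ ∈ K ∧ σ.card = k + 1) → DownConnected k T → T = C)
    (ε : Finset α → ℤ)
    (hε : ∀ σ ∈ C, ε σ = 1 ∨ ε σ = -1)
    (hcoh : ∀ σ ∈ C, ∀ σ' ∈ C, σ ≠ σ' → (σ ∩ σ').card = k →
      ε σ * IncSgn σ (σ ∩ σ') = ε σ' * IncSgn σ' (σ ∩ σ')) :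
    ∀ σ ∈ C, (∀ τ ∈ K, σ ⊆ τ → τ.card = k + 2 → False) ∧
      (∀ τ ∈ K, σ ⊆ τ → σ = τ) :=
  stmt10_general K hKdc k hk C hCK hCconn hCmax ε hε hcoh
end

section
/- Let Γ be a finite abstract simplicial complex, C_k a down-connected component of k-faces, and X₀(C_k) the set of all vertices belonging to some face of C_k. Suppose X₀(C_k) is partitioned into k+1 disjoint sets V₀, …, V_k such that every face σ ∈ C_k meets each Vᵢ in exactly one vertex. Then C_k admits a coherent orientation: orienting each σ ∈ C_k as [x_σ(0), …, x_σ(k)], where x_σ(i) is the unique vertex of σ in Vᵢ, any two faces σ, σ' ∈ C_k sharing a (k−1)-face induce the same orientation on their intersection. -/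
def invCount {α : Type*} [LinearOrder α] (f : α → ℕ) (s : Finset α) : ℕ :=
  ∑ a ∈ s, (s.filter (fun b => a < b ∧ f b < f a)).card

lemma invCount_insert {α : Type*} [LinearOrder α] (f : α → ℕ) (s : Finset α) (x : α)
    (hx : x ∉ s) :
    invCount f (insert x s) = invCount f s
      + (s.filter (fun a => a < x ∧ f x < f a)).card
      + (s.filter (fun b => x < b ∧ f b < f x)).card := by
  unfold invCount
  rw [Finset.sum_insert hx]
  have h1 : ((insert x s).filter (fun b => x < b ∧ f b < f x)) =
      s.filter (fun b => x < b ∧ f b < f x) := by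
    rw [Finset.filter_insert]
    simp [lt_irrefl]
  rw [h1]
  have h2 : ∀ a ∈ s, ((insert x s).filter (fun b => a < b ∧ f b < f a)).card
      = (s.filter (fun b => a < b ∧ f b < f a)).card
        + (if a < x ∧ f x < f a then 1 else 0) := by
    intro a ha
    rw [Finset.filter_insert]
    split_ifs with h
    · rw [Finset.card_insert_of_notMem (fun hmem => hx (Finset.mem_of_mem_filter _ hmem))]
    · simp
  rw [Finset.sum_congr rfl h2, Finset.sum_add_distrib, ← Finset.card_filter]
  ring

lemma count_split {α : Type*} [LinearOrder α] (f : α → ℕ) (s : Finset α) (x : α)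
    (hx : x ∉ s) (hne : ∀ a ∈ s, f a ≠ f x) :
    invCount f (insert x s) + (s.filter (· < x)).card
      = invCount f s + (s.filter (fun a => f a < f x)).card
        + 2 * (s.filter (fun a => a < x ∧ f x < f a)).card := by
  rw [invCount_insert f s x hx]
  have e1 : s.filter (· < x)
      = s.filter (fun a => (a < x ∧ f a < f x) ∨ (a < x ∧ f x < f a)) := by
    apply Finset.filter_congr
    intro a ha
    constructor
    · intro h
      rcases (hne a ha).lt_or_gt with h' | h' <;> tauto
    · tauto
  have e2 : s.filter (fun a => f a < f x)
      = s.filter (fun a => (a < x ∧ f a < f x) ∨ (x < a ∧ f a < f x)) := by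
    apply Finset.filter_congr
    intro a ha
    constructor
    · intro h
      have hax : a ≠ x := fun h' => hx (h' ▸ ha)
      rcases hax.lt_or_gt with h' | h' <;> tauto
    · tauto
  rw [e1, e2, Finset.filter_or, Finset.filter_or,
    Finset.card_union_of_disjoint, Finset.card_union_of_disjoint]
  · omega
  · rw [Finset.disjoint_left]
    intro a h1 h2
    simp only [Finset.mem_filter] at h1 h2
    exact absurd h2.2.1 (lt_asymm h1.2.1)
  · rw [Finset.disjoint_left]
    intro a h1 h2
    simp only [Finset.mem_filter] at h1 h2
    omega

/-- If the vertex set `X₀(C)` of a down-connected component `C` of `k`-faces of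
a finite abstract simplicial complex is partitioned into `k+1` classes
`V₀, …, V_k` each meeting every face of `C` in exactly one vertex, then `C`
admits a coherent orientation: an assignment `ε : faces → {±1}` such that any
two down-adjacent faces of `C` induce the same orientation on their common
`(k−1)`-face. -/
theorem stmt11 {α : Type} [LinearOrder α] [Fintype α]
    (K : Finset (Finset α))
    (hKne : ∀ σ ∈ K, σ.Nonempty)
    (hKdc : ∀ σ ∈ K, ∀ τ, τ ⊆ σ → τ.Nonempty → τ ∈ K)
    (k : ℕ)
    (C : Finset (Finset α))
    (hCK : ∀ σ ∈ C, σ ∈ K ∧ σ.card = k + 1)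
    (hCconn : DownConnected k C)
    (hCmax : ∀ T : Finset (Finset α), C ⊆ T →
      (∀ σ ∈ T, σ ∈ K ∧ σ.card = k + 1) → DownConnected k T → T = C)
    (V : Fin (k + 1) → Finset α)
    (hVdisj : ∀ i j, i ≠ j → Disjoint (V i) (V j))
    (hVcover : ∀ x : α, (∃ σ ∈ C, x ∈ σ) ↔ ∃ i, x ∈ V i)
    (hVmeet : ∀ σ ∈ C, ∀ i, (σ ∩ V i).card = 1) :
    ∃ ε : Finset α → ℤ, (∀ σ ∈ C, ε σ = 1 ∨ ε σ = -1) ∧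
      ∀ σ ∈ C, ∀ σ' ∈ C, σ ≠ σ' → (σ ∩ σ').card = k →
        ε σ * IncSgn σ (σ ∩ σ') = ε σ' * IncSgn σ' (σ ∩ σ') := by
  classical
  -- the class index of a vertex
  set idx : α → Fin (k + 1) :=
    fun x => if h : ∃ i, x ∈ V i then h.choose else 0 with hidxdef
  have hidx_mem : ∀ x : α, (∃ i, x ∈ V i) → x ∈ V (idx x) := by
    intro x h
    simp only [hidxdef, dif_pos h]
    exact h.choose_spec
  have hidx_inj : ∀ σ ∈ C, ∀ a ∈ σ, ∀ b ∈ σ, idx a = idx b → a = b := by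
    intro σ hσ a ha b hb hab
    have hamem : a ∈ V (idx a) := hidx_mem a ((hVcover a).1 ⟨σ, hσ, ha⟩)
    have hbmem : b ∈ V (idx b) := hidx_mem b ((hVcover b).1 ⟨σ, hσ, hb⟩)
    obtain ⟨z, hz⟩ := Finset.card_eq_one.1 (hVmeet σ hσ (idx a))
    have h1 : a ∈ σ ∩ V (idx a) := Finset.mem_inter.2 ⟨ha, hamem⟩
    have h2 : b ∈ σ ∩ V (idx a) := Finset.mem_inter.2 ⟨hb, hab ▸ hbmem⟩
    rw [hz, Finset.mem_singleton] at h1 h2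
    rw [h1, h2]
  set f : α → ℕ := fun x => (idx x : ℕ) with hfdef
  refine ⟨fun σ => (-1 : ℤ) ^ invCount f σ, ?_, ?_⟩
  · intro σ _
    rcases Nat.even_or_odd (invCount f σ) with h | h
    · exact Or.inl h.neg_one_pow
    · exact Or.inr h.neg_one_pow
  · intro σ hσ σ' hσ' hne hcard
    set ρ : Finset α := σ ∩ σ' with hρdef
    have hρσ : ρ ⊆ σ := Finset.inter_subset_left
    have hρσ' : ρ ⊆ σ' := Finset.inter_subset_right
    -- extract the two extra vertices
    have hget : ∀ τ ∈ C, ρ ⊆ τ → ∃ x, x ∈ τ ∧ x ∉ ρ ∧ insert x ρ = τ := by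
      intro τ hτ hρτ
      have hcτ : τ.card = k + 1 := (hCK τ hτ).2
      have hsd : (τ \ ρ).card = 1 := by
        rw [Finset.card_sdiff_of_subset hρτ, hcτ, hcard]
        omega
      obtain ⟨x, hx⟩ := Finset.card_eq_one.1 hsd
      have hxτρ : x ∈ τ \ ρ := hx ▸ Finset.mem_singleton_self x
      rw [Finset.mem_sdiff] at hxτρ
      refine ⟨x, hxτρ.1, hxτρ.2, ?_⟩
      rw [Finset.insert_eq, ← hx, Finset.sdiff_union_of_subset hρτ]
    obtain ⟨x, hxσ, hxρ, hxins⟩ := hget σ hσ hρσ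
    obtain ⟨y, hyσ', hyρ, hyins⟩ := hget σ' hσ' hρσ'
    -- x and y lie in the same class
    have hxy : idx x = idx y := by
      by_contra hcon
      obtain ⟨z, hz⟩ := Finset.card_eq_one.1 (hVmeet σ hσ (idx y))
      have hzmem : z ∈ σ ∩ V (idx y) := hz ▸ Finset.mem_singleton_self z
      rw [Finset.mem_inter] at hzmem
      have hzx : z ≠ x := by
        intro h
        have hxmem : x ∈ V (idx x) := hidx_mem x ((hVcover x).1 ⟨σ, hσ, hxσ⟩)
        exact Finset.disjoint_left.1 (hVdisj _ _ hcon) hxmem (h ▸ hzmem.2)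
      have hzρ : z ∈ ρ := by
        have := hzmem.1
        rw [← hxins, Finset.mem_insert] at this
        tauto
      have hzidx : idx z = idx y := by
        have hzV : ∃ i, z ∈ V i := ⟨idx y, hzmem.2⟩
        have hz1 : z ∈ V (idx z) := hidx_mem z hzV
        by_contra h
        exact Finset.disjoint_left.1 (hVdisj _ _ h) hz1 hzmem.2
      have : z = y := hidx_inj σ' hσ' z (hρσ' hzρ) y hyσ' hzidx
      exact hyρ (this ▸ hzρ)
    -- distinct f-values on each face
    have hfne : ∀ τ ∈ C, ∀ w ∈ τ, w ∉ ρ → ρ ⊆ τ → ∀ a ∈ ρ, f a ≠ f w := by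
      intro τ hτ w hwτ hwρ hρτ a ha hfa
      have : idx a = idx w := Fin.val_injective hfa
      have : a = w := hidx_inj τ hτ a (hρτ ha) w hwτ this
      exact hwρ (this ▸ ha)
    -- compute IncSgn
    have hinc : ∀ (τ : Finset α) (w : α), w ∉ ρ → insert w ρ = τ →
        IncSgn τ ρ = (-1 : ℤ) ^ (ρ.filter (· < w)).card := by
      intro τ w hwρ hins
      have hsd : τ \ ρ = {w} := by
        rw [← hins, Finset.insert_sdiff_of_notMem _ ?_, Finset.insert_eq,
          Finset.sdiff_self, Finset.union_empty]
        · exact hwρ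
      unfold IncSgn
      rw [hsd, Finset.sum_singleton, ← hins, Finset.filter_insert]
      simp [lt_irrefl]
    -- the key computation
    have hmain : ∀ (τ : Finset α) (w : α), w ∉ ρ → insert w ρ = τ →
        (∀ a ∈ ρ, f a ≠ f w) →
        (-1 : ℤ) ^ invCount f τ * (-1 : ℤ) ^ (ρ.filter (· < w)).card
          = (-1 : ℤ) ^ (invCount f ρ + (ρ.filter (fun a => f a < f w)).card) := by
      intro τ w hwρ hins hne'
      rw [← pow_add, ← hins, count_split f ρ w hwρ hne', pow_add, pow_mul,
        neg_one_sq, one_pow, mul_one]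
    rw [hinc σ x hxρ hxins, hinc σ' y hyρ hyins,
      hmain σ x hxρ hxins (hfne σ hσ x hxσ hxρ hρσ),
      hmain σ' y hyρ hyins (hfne σ' hσ' y hyσ' hyρ hρσ')]
    have : f x = f y := by rw [hfdef]; exact congrArg Fin.val hxy
    rw [this]
end

section
/- Let Δ be the normalized Laplacian of a finite connected weighted graph with edge weights ω > 0 and vertex measure μ > 0: Δ(u,u) = (Σ_{u'~u} ω(u,u'))/μ(u) and Δ(u,u') = −ω(u,u')/(μ(u)^{1/2}μ(u')^{1/2}) for u ~ u'. For ∅ ≠ Y ⊊ V set β(Y) = ω(Y, V∖Y)/min(μ(Y), μ(V∖Y)), where ω(Y, V∖Y) sums weights of edges between Y and its complement and μ(Y) = Σ_{u∈Y} μ(u). Then the second smallest eigenvalue satisfies λ_{min+1}(Δ) ≤ 2·β(Y) for every such Y, hence λ_{min+1}(Δ) ≤ 2h where h = min_Y β(Y). -/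
open Matrix

/-- Cheeger upper bound for the second smallest eigenvalue of the normalized
Laplacian of a finite connected weighted graph: `λ_{min+1}(Δ) ≤ 2·β(Y)` for
every `∅ ≠ Y ⊊ V`, hence `λ_{min+1}(Δ) ≤ 2h`. The second smallest eigenvalue
is expressed via its Courant–Fischer characterization as the infimum of the
Rayleigh quotients of `Δ` over nonzero functions orthogonal to `μ^{1/2}`. -/
theorem stmt14 {V : Type} [Fintype V] [DecidableEq V]
    (Adj : V → V → Prop) [DecidableRel Adj]
    (hsymm : ∀ u v, Adj u v → Adj v u)
    (hirr : ∀ u, ¬ Adj u u)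
    (hconn : ∀ u v : V, Relation.ReflTransGen Adj u v)
    (hcard : 2 ≤ Fintype.card V)
    (ω : V → V → ℝ)
    (hωpos : ∀ u v, Adj u v → 0 < ω u v) (hωsymm : ∀ u v, ω u v = ω v u)
    (μ : V → ℝ) (hμpos : ∀ u, 0 < μ u)
    (Δ : Matrix V V ℝ)
    (hΔdiag : ∀ u, Δ u u = (∑ v ∈ Finset.univ.filter (fun v => Adj u v), ω u v) / μ u)
    (hΔadj : ∀ u v, Adj u v →
      Δ u v = - ω u v / (Real.sqrt (μ u) * Real.sqrt (μ v)))
    (hΔzero : ∀ u v, u ≠ v → ¬ Adj u v → Δ u v = 0) :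
    let β : Finset V → ℝ := fun Y =>
      (∑ u ∈ Y, ∑ v ∈ Yᶜ, if Adj u v then ω u v else 0) /
        min (∑ u ∈ Y, μ u) (∑ v ∈ Yᶜ, μ v)
    let lam2 : ℝ := sInf {r : ℝ | ∃ f : V → ℝ, f ≠ 0 ∧
      (∑ u, f u * Real.sqrt (μ u)) = 0 ∧ r = (f ⬝ᵥ Δ.mulVec f) / (f ⬝ᵥ f)}
    (∀ Y : Finset V, Y.Nonempty → Y ≠ Finset.univ → lam2 ≤ 2 * β Y) ∧
    lam2 ≤ 2 * sInf {b : ℝ | ∃ Y : Finset V, Y.Nonempty ∧ Y ≠ Finset.univ ∧ b = β Y} := by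
  intro β lam2
  have hsqrt : ∀ u : V, Real.sqrt (μ u) * Real.sqrt (μ u) = μ u :=
    fun u => Real.mul_self_sqrt (hμpos u).le
  have hsqrtpos : ∀ u : V, 0 < Real.sqrt (μ u) :=
    fun u => Real.sqrt_pos.mpr (hμpos u)
  -- the Rayleigh set is bounded below
  set S : Set ℝ := {r : ℝ | ∃ f : V → ℝ, f ≠ 0 ∧
      (∑ u, f u * Real.sqrt (μ u)) = 0 ∧ r = (f ⬝ᵥ Δ.mulVec f) / (f ⬝ᵥ f)} with hS
  have hlam2 : lam2 = sInf S := rfl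
  have hbdd : BddBelow S := by
    refine ⟨-(∑ u, ∑ v, |Δ u v|), ?_⟩
    rintro r ⟨f, hf, -, rfl⟩
    have hs : 0 < f ⬝ᵥ f := by
      have hex : ∃ u, f u ≠ 0 := by
        by_contra h; push_neg at h; exact hf (funext h)
      obtain ⟨u₀, hu₀⟩ := hex
      have : (0:ℝ) < ∑ u, f u * f u := by
        apply Finset.sum_pos' (fun u _ => mul_self_nonneg (f u))
        exact ⟨u₀, Finset.mem_univ _, mul_self_pos.mpr hu₀⟩
      simpa [dotProduct] using this
    rw [le_div_iff₀ hs]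
    have hbound : ∀ u v : V, -(|Δ u v| * (f ⬝ᵥ f)) ≤ f u * (Δ u v * f v) := by
      intro u v
      have h1 : f u * f u ≤ f ⬝ᵥ f :=
        Finset.single_le_sum (fun i _ => mul_self_nonneg (f i)) (Finset.mem_univ u)
      have h2 : f v * f v ≤ f ⬝ᵥ f :=
        Finset.single_le_sum (fun i _ => mul_self_nonneg (f i)) (Finset.mem_univ v)
      have h3 : |f u * f v| ≤ f ⬝ᵥ f := by
        rw [abs_mul]
        nlinarith [sq_nonneg (|f u| - |f v|), abs_nonneg (f u), abs_nonneg (f v),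
          sq_abs (f u), sq_abs (f v)]
      have h4 : f u * (Δ u v * f v) ≥ -|Δ u v * (f u * f v)| := by
        rw [ge_iff_le, neg_le]
        calc -(f u * (Δ u v * f v)) ≤ |-(f u * (Δ u v * f v))| := le_abs_self _
          _ = |Δ u v * (f u * f v)| := by rw [abs_neg]; ring_nf
      have h5 : |Δ u v * (f u * f v)| ≤ |Δ u v| * (f ⬝ᵥ f) := by
        rw [abs_mul]
        exact mul_le_mul_of_nonneg_left h3 (abs_nonneg _)
      linarith
    calc -(∑ u, ∑ v, |Δ u v|) * (f ⬝ᵥ f) = ∑ u, ∑ v, -(|Δ u v| * (f ⬝ᵥ f)) := by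
          simp [Finset.sum_mul, neg_mul]
      _ ≤ ∑ u, ∑ v, f u * (Δ u v * f v) :=
          Finset.sum_le_sum (fun u _ => Finset.sum_le_sum (fun v _ => hbound u v))
      _ = f ⬝ᵥ Δ.mulVec f := by simp [dotProduct, mulVec, Finset.mul_sum]
  have key : ∀ Y : Finset V, Y.Nonempty → Y ≠ Finset.univ → lam2 ≤ 2 * β Y := by
    intro Y hYne hYu
    set a := ∑ u ∈ Y, μ u with hadef
    set b := ∑ v ∈ Yᶜ, μ v with hbdef
    have ha : 0 < a := Finset.sum_pos (fun u _ => hμpos u) hYne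
    have hYc : Yᶜ.Nonempty := by
      rw [Finset.nonempty_iff_ne_empty]
      intro h
      exact hYu (by rwa [Finset.compl_eq_empty_iff] at h)
    have hb : 0 < b := Finset.sum_pos (fun u _ => hμpos u) hYc
    set g : V → ℝ := fun u => if u ∈ Y then a⁻¹ else -b⁻¹ with hg
    set f : V → ℝ := fun u => Real.sqrt (μ u) * g u with hfdef
    set W := ∑ u ∈ Y, ∑ v ∈ Yᶜ, (if Adj u v then ω u v else 0) with hWdef
    have hW0 : 0 ≤ W := by
      apply Finset.sum_nonneg; intro u _; apply Finset.sum_nonneg; intro v _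
      split_ifs with h
      · exact (hωpos u v h).le
      · exact le_rfl
    -- f is nonzero
    have hfne : f ≠ 0 := by
      obtain ⟨u₀, hu₀⟩ := hYne
      intro h
      have h0 := congrFun h u₀
      simp only [hfdef, Pi.zero_apply] at h0
      rw [hg] at h0
      simp only [if_pos hu₀] at h0
      exact (mul_pos (hsqrtpos u₀) (inv_pos.mpr ha)).ne' h0
    -- orthogonality
    have hterm : ∀ u, f u * Real.sqrt (μ u) = μ u * g u := by
      intro u
      show Real.sqrt (μ u) * g u * Real.sqrt (μ u) = μ u * g u
      calc Real.sqrt (μ u) * g u * Real.sqrt (μ u)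
          = Real.sqrt (μ u) * Real.sqrt (μ u) * g u := by ring
        _ = μ u * g u := by rw [hsqrt u]
    have horth : (∑ u, f u * Real.sqrt (μ u)) = 0 := by
      rw [Finset.sum_congr rfl (fun u _ => hterm u)]
      rw [← Finset.sum_add_sum_compl Y]
      have e1 : ∑ u ∈ Y, μ u * g u = 1 := by
        have h' : ∀ u ∈ Y, μ u * g u = μ u * a⁻¹ := by
          intro u hu; rw [hg]; simp [if_pos hu]
        rw [Finset.sum_congr rfl h', ← Finset.sum_mul, ← hadef,
          mul_inv_cancel₀ ha.ne']
      have e2 : ∑ u ∈ Yᶜ, μ u * g u = -1 := by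
        have h' : ∀ u ∈ Yᶜ, μ u * g u = μ u * -b⁻¹ := by
          intro u hu
          rw [hg]; simp [if_neg (Finset.mem_compl.mp hu)]
        rw [Finset.sum_congr rfl h', ← Finset.sum_mul, ← hbdef]
        rw [mul_neg, mul_inv_cancel₀ hb.ne']
      rw [e1, e2]; ring
    -- norm
    have hfdot : f ⬝ᵥ f = a⁻¹ + b⁻¹ := by
      have hterm2 : ∀ u, f u * f u = μ u * (g u * g u) := by
        intro u
        show Real.sqrt (μ u) * g u * (Real.sqrt (μ u) * g u) = μ u * (g u * g u)
        calc Real.sqrt (μ u) * g u * (Real.sqrt (μ u) * g u)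
            = Real.sqrt (μ u) * Real.sqrt (μ u) * (g u * g u) := by ring
          _ = μ u * (g u * g u) := by rw [hsqrt u]
      show ∑ u, f u * f u = a⁻¹ + b⁻¹
      rw [Finset.sum_congr rfl (fun u _ => hterm2 u)]
      rw [← Finset.sum_add_sum_compl Y]
      have e1 : ∑ u ∈ Y, μ u * (g u * g u) = a⁻¹ := by
        have h' : ∀ u ∈ Y, μ u * (g u * g u) = μ u * (a⁻¹ * a⁻¹) := by
          intro u hu; rw [hg]; simp [if_pos hu]
        rw [Finset.sum_congr rfl h', ← Finset.sum_mul, ← hadef,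
          ← mul_assoc, mul_inv_cancel₀ ha.ne', one_mul]
      have e2 : ∑ u ∈ Yᶜ, μ u * (g u * g u) = b⁻¹ := by
        have h' : ∀ u ∈ Yᶜ, μ u * (g u * g u) = μ u * (b⁻¹ * b⁻¹) := by
          intro u hu; rw [hg]; simp [if_neg (Finset.mem_compl.mp hu)]
        rw [Finset.sum_congr rfl h', ← Finset.sum_mul, ← hbdef,
          ← mul_assoc, mul_inv_cancel₀ hb.ne', one_mul]
      rw [e1, e2]
    -- the quadratic form
    have step1 : f ⬝ᵥ Δ.mulVec f
        = ∑ u, ∑ v, (if Adj u v then ω u v * (g u * g u - g u * g v) else 0) := by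
      have hlhs : f ⬝ᵥ Δ.mulVec f = ∑ u, ∑ v, f u * (Δ u v * f v) := by
        simp [dotProduct, mulVec, Finset.mul_sum]
      rw [hlhs]
      refine Finset.sum_congr rfl fun u _ => ?_
      have hdiag : f u * (Δ u u * f u)
          = ∑ v, (if Adj u v then ω u v * (g u * g u) else 0) := by
        rw [← Finset.sum_filter, ← Finset.sum_mul, hΔdiag u]
        show Real.sqrt (μ u) * g u *
            ((∑ v ∈ Finset.univ.filter (fun v => Adj u v), ω u v) / μ u *
              (Real.sqrt (μ u) * g u))
          = (∑ v ∈ Finset.univ.filter (fun v => Adj u v), ω u v) * (g u * g u)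
        set T := ∑ v ∈ Finset.univ.filter (fun v => Adj u v), ω u v
        have hh : Real.sqrt (μ u) * g u * (T / μ u * (Real.sqrt (μ u) * g u))
            = Real.sqrt (μ u) * Real.sqrt (μ u) / μ u * (T * (g u * g u)) := by
          ring
        rw [hh, hsqrt u, div_self (hμpos u).ne', one_mul]
      have hoff : ∑ v ∈ Finset.univ.erase u, f u * (Δ u v * f v)
          = ∑ v, (if Adj u v then -(ω u v * (g u * g v)) else 0) := by
        rw [← Finset.sum_erase (f := fun v => if Adj u v then -(ω u v * (g u * g v)) else 0)
          Finset.univ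
          (show (if Adj u u then -(ω u u * (g u * g u)) else 0) = 0 by
            simp [hirr u])]
        refine Finset.sum_congr rfl fun v hv => ?_
        have hvu : v ≠ u := Finset.ne_of_mem_erase hv
        by_cases hA : Adj u v
        · rw [if_pos hA, hΔadj u v hA]
          show Real.sqrt (μ u) * g u *
              (-ω u v / (Real.sqrt (μ u) * Real.sqrt (μ v)) *
                (Real.sqrt (μ v) * g v)) = -(ω u v * (g u * g v))
          have hu' := (hsqrtpos u).ne'
          have hv' := (hsqrtpos v).ne'
          field_simp
        · rw [if_neg hA, hΔzero u v (Ne.symm hvu) hA]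
          ring
      calc ∑ v, f u * (Δ u v * f v)
          = f u * (Δ u u * f u) + ∑ v ∈ Finset.univ.erase u, f u * (Δ u v * f v) :=
            (Finset.add_sum_erase _ _ (Finset.mem_univ u)).symm
        _ = (∑ v, (if Adj u v then ω u v * (g u * g u) else 0))
            + ∑ v, (if Adj u v then -(ω u v * (g u * g v)) else 0) := by
            rw [hdiag, hoff]
        _ = ∑ v, ((if Adj u v then ω u v * (g u * g u) else 0)
            + (if Adj u v then -(ω u v * (g u * g v)) else 0)) :=
            Finset.sum_add_distrib.symm
        _ = ∑ v, (if Adj u v then ω u v * (g u * g u - g u * g v) else 0) := by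
            refine Finset.sum_congr rfl fun v _ => ?_
            split_ifs <;> ring
    have hsplit : ∀ t : V → V → ℝ, ∑ u, ∑ v, t u v
        = ((∑ u ∈ Y, ∑ v ∈ Y, t u v) + ∑ u ∈ Y, ∑ v ∈ Yᶜ, t u v)
          + ((∑ u ∈ Yᶜ, ∑ v ∈ Y, t u v) + ∑ u ∈ Yᶜ, ∑ v ∈ Yᶜ, t u v) := by
      intro t
      rw [← Finset.sum_add_sum_compl Y (fun u => ∑ v, t u v)]
      rw [← Finset.sum_add_distrib, ← Finset.sum_add_distrib]
      congr 1 <;>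
        exact Finset.sum_congr rfl fun u _ => (Finset.sum_add_sum_compl Y _).symm
    have hYY : ∑ u ∈ Y, ∑ v ∈ Y,
        (if Adj u v then ω u v * (g u * g u - g u * g v) else 0) = 0 := by
      refine Finset.sum_eq_zero fun u hu => Finset.sum_eq_zero fun v hv => ?_
      rw [hg]
      simp [if_pos hu, if_pos hv]
    have hYcYc : ∑ u ∈ Yᶜ, ∑ v ∈ Yᶜ,
        (if Adj u v then ω u v * (g u * g u - g u * g v) else 0) = 0 := by
      refine Finset.sum_eq_zero fun u hu => Finset.sum_eq_zero fun v hv => ?_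
      rw [hg]
      simp [if_neg (Finset.mem_compl.mp hu), if_neg (Finset.mem_compl.mp hv)]
    have hYYc : ∑ u ∈ Y, ∑ v ∈ Yᶜ,
        (if Adj u v then ω u v * (g u * g u - g u * g v) else 0)
        = a⁻¹ * (a⁻¹ + b⁻¹) * W := by
      have h' : ∀ u ∈ Y, ∀ v ∈ Yᶜ,
          (if Adj u v then ω u v * (g u * g u - g u * g v) else 0)
          = a⁻¹ * (a⁻¹ + b⁻¹) * (if Adj u v then ω u v else 0) := by
        intro u hu v hv
        rw [hg]
        simp only [if_pos hu, if_neg (Finset.mem_compl.mp hv)]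
        split_ifs <;> ring
      rw [Finset.sum_congr rfl (fun u hu =>
        Finset.sum_congr rfl (fun v hv => h' u hu v hv))]
      rw [hWdef]
      rw [Finset.mul_sum]
      exact Finset.sum_congr rfl fun u _ => (Finset.mul_sum _ _ _).symm
    have hWsymm : ∑ u ∈ Yᶜ, ∑ v ∈ Y, (if Adj u v then ω u v else 0) = W := by
      rw [Finset.sum_comm]
      refine Finset.sum_congr rfl fun x hx => Finset.sum_congr rfl fun y hy => ?_
      by_cases h : Adj x y
      · simp [h, hsymm x y h, hωsymm x y]
      · have h' : ¬ Adj y x := fun hc => h (hsymm y x hc)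
        simp [h, h']
    have hYcY : ∑ u ∈ Yᶜ, ∑ v ∈ Y,
        (if Adj u v then ω u v * (g u * g u - g u * g v) else 0)
        = b⁻¹ * (a⁻¹ + b⁻¹) * W := by
      have h' : ∀ u ∈ Yᶜ, ∀ v ∈ Y,
          (if Adj u v then ω u v * (g u * g u - g u * g v) else 0)
          = b⁻¹ * (a⁻¹ + b⁻¹) * (if Adj u v then ω u v else 0) := by
        intro u hu v hv
        rw [hg]
        simp only [if_neg (Finset.mem_compl.mp hu), if_pos hv]
        split_ifs <;> ring
      rw [Finset.sum_congr rfl (fun u hu =>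
        Finset.sum_congr rfl (fun v hv => h' u hu v hv))]
      rw [← hWsymm, Finset.mul_sum]
      exact Finset.sum_congr rfl fun u _ => (Finset.mul_sum _ _ _).symm
    have hquad : f ⬝ᵥ Δ.mulVec f = W * ((a⁻¹ + b⁻¹) * (a⁻¹ + b⁻¹)) := by
      rw [step1, hsplit, hYY, hYcYc, hYYc, hYcY]
      ring
    have hr : (f ⬝ᵥ Δ.mulVec f) / (f ⬝ᵥ f) = W * (a⁻¹ + b⁻¹) := by
      rw [hquad, hfdot]
      have hab : (0:ℝ) < a⁻¹ + b⁻¹ := by positivity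
      field_simp
    have hmemS : (f ⬝ᵥ Δ.mulVec f) / (f ⬝ᵥ f) ∈ S := ⟨f, hfne, horth, rfl⟩
    have h1 : lam2 ≤ W * (a⁻¹ + b⁻¹) := hr ▸ csInf_le hbdd hmemS
    have hmin : 0 < min a b := lt_min ha hb
    have hia : a⁻¹ ≤ (min a b)⁻¹ := by
      apply inv_anti₀ hmin (min_le_left a b)
    have hib : b⁻¹ ≤ (min a b)⁻¹ := by
      apply inv_anti₀ hmin (min_le_right a b)
    have h2 : W * (a⁻¹ + b⁻¹) ≤ 2 * (W / min a b) := by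
      rw [div_eq_mul_inv]
      calc W * (a⁻¹ + b⁻¹) ≤ W * ((min a b)⁻¹ + (min a b)⁻¹) := by
            apply mul_le_mul_of_nonneg_left (by linarith) hW0
        _ = 2 * (W * (min a b)⁻¹) := by ring
    show lam2 ≤ 2 * (W / min a b)
    linarith
  refine ⟨key, ?_⟩
  have hVne : Nonempty V := Fintype.card_pos_iff.mp (by omega)
  obtain ⟨u₀⟩ := hVne
  have h1 : ({u₀} : Finset V).Nonempty := Finset.singleton_nonempty _
  have h2 : ({u₀} : Finset V) ≠ Finset.univ := by
    intro h
    have hc : Fintype.card V = 1 := by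
      rw [← Finset.card_univ, ← h, Finset.card_singleton]
    omega
  set B := {b : ℝ | ∃ Y : Finset V, Y.Nonempty ∧ Y ≠ Finset.univ ∧ b = β Y} with hB
  have hBne : B.Nonempty := ⟨β {u₀}, {u₀}, h1, h2, rfl⟩
  have hBfin : B.Finite := by
    apply Set.Finite.subset (Set.finite_range β)
    rintro x ⟨Y, -, -, rfl⟩
    exact ⟨Y, rfl⟩
  obtain ⟨Y₀, hY₀ne, hY₀u, hY₀eq⟩ := hBne.csInf_mem hBfin
  show lam2 ≤ 2 * sInf B
  rw [hY₀eq]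
  exact key Y₀ hY₀ne hY₀u
end
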